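/- arXiv:0902.2473 — 5 statements merged into one kernel-verified Lean document; each statement's English description precedes it below -/
import Mathlib

section
/- Let g_n, g be closed (lower semicontinuous) proper convex functions on ℝ with Int(dom(g)) ≠ ∅ and g_n → g pointwise on ℝ. Then g_n* → g* pointwise on the interior of dom(g*). -/
open Filter Topology

/-- The effective domain of an `EReal`-valued function on `ℝ`. -/
def edom (g : ℝ → EReal) : Set ℝ := {x | g x ≠ ⊤}

/-- Convexity for `EReal`-valued functions on `ℝ`. -/
def Cvx (g : ℝ → EReal) : Prop :=
  ∀ x y a b : ℝ, 0 ≤ a → 0 ≤ b → a + b = 1 →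
    g (a * x + b * y) ≤ (a : EReal) * g x + (b : EReal) * g y

/-- The Legendre conjugate `g*(α) = sup_x (α x - g x)` of an `EReal`-valued function. -/
noncomputable def conjE (g : ℝ → EReal) (α : ℝ) : EReal :=
  ⨆ x : ℝ, ((α * x : ℝ) : EReal) - g x

/-- The left derivative `g⁻(x)`, as the supremum of slopes from the left. -/
noncomputable def leftD (g : ℝ → EReal) (x : ℝ) : ℝ :=
  sSup {r : ℝ | ∃ y < x, ((r * (x - y) : ℝ) : EReal) ≤ g x - g y}

/-- The right derivative `g⁺(x)`, as the infimum of slopes from the right. -/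
noncomputable def rightD (g : ℝ → EReal) (x : ℝ) : ℝ :=
  sInf {r : ℝ | ∃ y > x, g y - g x ≤ ((r * (y - x) : ℝ) : EReal)}

/-!
The lower bound `conjE g0 α ≤ liminf` holds for any pointwise limit: each `α x - g0 x` is the
limit of `α x - g n x ≤ conjE (g n) α`. For the upper bound take `d > c = conjE g0 α`; it suffices
that eventually `α x - g n x ≤ d` for all `x` simultaneously. Since `conjE g0` is finite at some
`β > α`, `g0` lies above a line of slope `γ ∈ (α, β)` at some point `y` to the right of a point
`z` of `dom g0`. This chord survives in `g n` for large `n`, and convexity keeps `g n` above its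
extension beyond `y`, which beats `α x - d` for large `x`; symmetrically as `x → -∞`. On the
remaining compact interval, lower semicontinuity gives near each `x₀` a point `w` with
`g0 w > α x₀ - (c + d) / 2`, and extrapolating the chord of `g n` from another point of `dom g0`
through `w` bounds `g n` from below near `x₀`; compactness makes these bounds uniform.
-/

theorem EReal.coe_sub_le_comm {a c : ℝ} {b : EReal} :
    (a : EReal) - b ≤ c ↔ ((a - c : ℝ) : EReal) ≤ b := by
  rw [EReal.sub_le_iff_le_add (.inr (EReal.coe_ne_top c)) (.inr (EReal.coe_ne_bot c)),
    EReal.coe_sub, EReal.sub_le_iff_le_add (.inl (EReal.coe_ne_bot c)) (.inl (EReal.coe_ne_top c)),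
    add_comm]

protected theorem EReal.Tendsto.coe_sub {ι : Type*} {l : Filter ι} {u : ι → EReal} {a : EReal}
    (c : ℝ) (h : Tendsto u l (𝓝 a)) :
    Tendsto (fun i => (c : EReal) - u i) l (𝓝 ((c : EReal) - a)) := by
  have hadd := (EReal.continuousAt_add (p := ((c : EReal), -a))
    (.inl (EReal.coe_ne_top c)) (.inl (EReal.coe_ne_bot c))).tendsto.comp
    (tendsto_const_nhds.prodMk_nhds h.neg)
  simpa only [sub_eq_add_neg, Function.comp_def] using hadd

theorem coe_mul_sub_le_conjE (g : ℝ → EReal) (α x : ℝ) :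
    ((α * x : ℝ) : EReal) - g x ≤ conjE g α :=
  le_iSup (fun x => ((α * x : ℝ) : EReal) - g x) x

theorem conjE_ne_bot {g : ℝ → EReal} {x : ℝ} (hx : g x ≠ ⊤) (α : ℝ) : conjE g α ≠ ⊥ := by
  refine ne_bot_of_le_ne_bot ?_ (coe_mul_sub_le_conjE g α x)
  generalize g x = y at hx
  induction y using EReal.rec with
  | bot => exact (EReal.coe_sub_bot _).trans_ne top_ne_bot
  | top => exact absurd rfl hx
  | coe y => exact_mod_cast EReal.coe_ne_bot (α * x - y)

theorem coe_mul_sub_le_of_conjE_le {g : ℝ → EReal} {α c : ℝ} (h : conjE g α ≤ c) (x : ℝ) :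
    ((α * x - c : ℝ) : EReal) ≤ g x :=
  EReal.coe_sub_le_comm.1 ((coe_mul_sub_le_conjE g α x).trans h)

theorem conjE_comp_neg (g : ℝ → EReal) (β : ℝ) : conjE (fun x => g (-x)) β = conjE g (-β) := by
  unfold conjE
  refine le_antisymm (iSup_le fun x => ?_) (iSup_le fun x => ?_)
  · simpa only [neg_mul_neg] using le_iSup (fun y => ((-β * y : ℝ) : EReal) - g y) (-x)
  · simpa only [mul_neg, neg_mul, neg_neg] using
      le_iSup (fun y => ((β * y : ℝ) : EReal) - g (-y)) (-x)

theorem conjE_le_liminf {ι : Type*} {l : Filter ι} [l.NeBot] {g : ι → ℝ → EReal} {g0 : ℝ → EReal}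
    (hlim : ∀ x, Tendsto (fun i => g i x) l (𝓝 (g0 x))) (α : ℝ) :
    conjE g0 α ≤ liminf (fun i => conjE (g i) α) l :=
  iSup_le fun x => (EReal.Tendsto.coe_sub (α * x) (hlim x)).liminf_eq.symm.trans_le <|
    liminf_le_liminf (Eventually.of_forall fun i => coe_mul_sub_le_conjE (g i) α x)

theorem Cvx.comp_neg {g : ℝ → EReal} (hg : Cvx g) : Cvx (fun x => g (-x)) := by
  intro x y a b ha hb hab
  simpa only [mul_neg, neg_add] using hg (-x) (-y) a b ha hb hab

/-- `G + (L - G) / s` is the value at `x` of the chord through `(z, G)` and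
`(z + s * (x - z), L)`. -/
theorem Cvx.add_div_le {g : ℝ → EReal} (hg : Cvx g) {z x s G L : ℝ} (hs0 : 0 < s) (hs1 : s ≤ 1)
    (hG : g z ≤ G) (hL : L ≤ g (z + s * (x - z))) : ((G + (L - G) / s : ℝ) : EReal) ≤ g x := by
  have hcvx := hg z x (1 - s) s (by linarith) hs0.le (by ring)
  rw [show (1 - s) * z + s * x = z + s * (x - z) by ring] at hcvx
  have key : (L : EReal) ≤ (((1 - s) * G : ℝ) : EReal) + s * g x := by
    refine (hL.trans hcvx).trans (add_le_add_left ?_ _)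
    rw [EReal.coe_mul]
    exact mul_le_mul_of_nonneg_left hG (by exact_mod_cast sub_nonneg.2 hs1)
  generalize g x = y at key ⊢
  induction y using EReal.rec with
  | bot => simp [EReal.coe_mul_bot_of_pos hs0] at key
  | top => exact le_top
  | coe y =>
    norm_cast at key ⊢
    rw [add_div' _ _ _ hs0.ne', div_le_iff₀ hs0]
    linarith

theorem exists_lt_of_conjE_ne_top {g : ℝ → EReal} {β γ : ℝ} (h : conjE g β ≠ ⊤) (hγ : γ < β)
    (z G : ℝ) : ∃ y > z, ((G + γ * (y - z) : ℝ) : EReal) < g y := by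
  by_contra! hle
  have hgrow : Tendsto (fun y => (β - γ) * y - G + γ * z) atTop atTop :=
    tendsto_atTop_add_const_right _ _ <| tendsto_atTop_add_const_right _ _ <|
      tendsto_id.const_mul_atTop (sub_pos.2 hγ)
  obtain ⟨y, hy, hzy⟩ :=
    ((hgrow.eventually_gt_atTop (conjE g β).toReal).and (eventually_gt_atTop z)).exists
  refine hy.not_ge (EReal.coe_le_coe_iff.1 ((?_ : _ ≤ conjE g β).trans (EReal.le_coe_toReal h)))
  calc (((β - γ) * y - G + γ * z : ℝ) : EReal)
      = ((β * y : ℝ) : EReal) - ((G + γ * (y - z) : ℝ) : EReal) := by rw [← EReal.coe_sub]; ring_nf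
    _ ≤ ((β * y : ℝ) : EReal) - g y := EReal.sub_le_sub le_rfl (hle y hzy)
    _ ≤ conjE g β := coe_mul_sub_le_conjE g β y

section Convergence

variable {ι : Type*} {l : Filter ι} {g : ι → ℝ → EReal} {g0 : ℝ → EReal}

theorem eventually_forall_ge_sub_le (hconv : ∀ i, Cvx (g i))
    (hlim : ∀ x, Tendsto (fun i => g i x) l (𝓝 (g0 x))) {z α β : ℝ} (hz : g0 z ≠ ⊤)
    (hαβ : α < β) (hβ : conjE g0 β ≠ ⊤) (c : ℝ) :
    ∃ Y, ∀ᶠ i in l, ∀ x ≥ Y, ((α * x : ℝ) : EReal) - g i x ≤ c := by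
  obtain ⟨G, hG, -⟩ := EReal.exists_between_coe_real hz.lt_top
  obtain ⟨γ, hαγ, hγβ⟩ := exists_between hαβ
  obtain ⟨y, hzy, hy⟩ := exists_lt_of_conjE_ne_top hβ hγβ z G
  obtain ⟨Y, hY⟩ : ∃ Y, ∀ x ≥ Y, α * x - c ≤ G + γ * (x - z) := by
    obtain ⟨Y, hY⟩ := eventually_atTop.1 <|
      (tendsto_id.const_mul_atTop (sub_pos.2 hαγ)).eventually_ge_atTop (γ * z - G - c)
    refine ⟨Y, fun x hx => ?_⟩
    have := hY x hx
    rw [id] at this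
    linarith
  refine ⟨max Y y, ?_⟩
  filter_upwards [(hlim y).eventually_const_lt hy, (hlim z).eventually_lt_const hG]
    with i hyi hzi x hx
  have hYx : Y ≤ x := le_of_max_le_left hx
  have hyx : y ≤ x := le_of_max_le_right hx
  have hs : 0 < (y - z) / (x - z) := div_pos (by linarith) (by linarith)
  have hline := (hconv i).add_div_le hs ((div_le_one (by linarith)).2 (by linarith)) hzi.le
    (L := G + γ * (y - z)) (by rw [div_mul_cancel₀ _ (by linarith), add_sub_cancel]; exact hyi.le)
  rw [EReal.coe_sub_le_comm]
  refine le_trans ?_ hline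
  have hslope : (G + γ * (y - z) - G) / ((y - z) / (x - z)) = γ * (x - z) := by
    field_simp [(by linarith : y - z ≠ 0)]
    ring
  rw [EReal.coe_le_coe_iff, hslope]
  exact hY x hYx

theorem eventually_forall_le_sub_le (hconv : ∀ i, Cvx (g i))
    (hlim : ∀ x, Tendsto (fun i => g i x) l (𝓝 (g0 x))) {z α β : ℝ} (hz : g0 z ≠ ⊤)
    (hβα : β < α) (hβ : conjE g0 β ≠ ⊤) (c : ℝ) :
    ∃ Y, ∀ᶠ i in l, ∀ x ≤ Y, ((α * x : ℝ) : EReal) - g i x ≤ c := by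
  obtain ⟨Y, hY⟩ := eventually_forall_ge_sub_le (g0 := fun x => g0 (-x))
    (fun i => (hconv i).comp_neg) (fun x => hlim (-x)) (z := -z) (by rwa [neg_neg])
    (neg_lt_neg hβα) (by rwa [conjE_comp_neg, neg_neg]) c
  refine ⟨-Y, hY.mono fun i hi x hx => ?_⟩
  simpa only [neg_mul_neg, neg_neg] using hi (-x) (le_neg_of_le_neg hx)

theorem eventually_sub_le_nhds (hconv : ∀ i, Cvx (g i))
    (hlim : ∀ x, Tendsto (fun i => g i x) l (𝓝 (g0 x))) (hlsc : LowerSemicontinuous g0)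
    {α c d : ℝ} (hge : ∀ x, ((α * x - c : ℝ) : EReal) ≤ g0 x) (hcd : c < d)
    {z xb : ℝ} (hz : g0 z ≠ ⊤) (hne : z ≠ xb) :
    ∀ᶠ p in l ×ˢ 𝓝 xb, ((α * p.2 : ℝ) : EReal) - g p.1 p.2 ≤ d := by
  obtain ⟨G, hG, -⟩ := EReal.exists_between_coe_real hz.lt_top
  set L := α * xb - (c + d) / 2 with hLdef
  have hL : (L : EReal) < g0 xb :=
    (EReal.coe_lt_coe_iff.2 (by linarith)).trans_le (hge xb)
  obtain ⟨s₀, ⟨hw, hB, hs₀⟩, hs₁⟩ : ∃ s₀, ((L : EReal) < g0 (z + s₀ * (xb - z)) ∧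
      α * xb - d < G + (L - G) / s₀ ∧ 0 < s₀) ∧ s₀ < 1 := by
    have hseg : Tendsto (fun s => z + s * (xb - z)) (𝓝 1) (𝓝 xb) :=
      (by fun_prop : Continuous fun s => z + s * (xb - z)).tendsto' 1 xb (by ring)
    have hline : Tendsto (fun s => G + (L - G) / s) (𝓝 1) (𝓝 L) := by
      have : Tendsto (fun s => G + (L - G) / s) (𝓝 1) (𝓝 (G + (L - G) / 1)) :=
        tendsto_const_nhds.add (tendsto_const_nhds.div tendsto_id one_ne_zero)
      rwa [div_one, add_sub_cancel] at this
    have h := (hseg.eventually (hlsc xb L hL)).and <|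
      (hline.eventually (lt_mem_nhds (show α * xb - d < L by linarith))).and
        (lt_mem_nhds one_pos)
    exact ((h.filter_mono nhdsWithin_le_nhds).and (self_mem_nhdsWithin (s := Set.Iio 1))).exists
  -- For `x` near `xb`, the point `w` where `g0 > L` lies between `z` and `x`, at the fraction
  -- `s₀ * (xb - z) / (x - z)` of the way, so the chord through `z` and `w` bounds `g i x`.
  set w := z + s₀ * (xb - z)
  have hratio : Tendsto (fun x => s₀ * (xb - z) / (x - z)) (𝓝 xb) (𝓝 s₀) := by
    have hxb : xb - z ≠ 0 := sub_ne_zero.2 hne.symm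
    have : Tendsto (fun x => s₀ * (xb - z) / (x - z)) (𝓝 xb) (𝓝 (s₀ * (xb - z) / (xb - z))) :=
      tendsto_const_nhds.div (tendsto_id.sub_const z) hxb
    rwa [mul_div_cancel_right₀ _ hxb] at this
  have hbound : Tendsto (fun x => G + (L - G) / (s₀ * (xb - z) / (x - z)) - α * x) (𝓝 xb)
      (𝓝 (G + (L - G) / s₀ - α * xb)) :=
    (tendsto_const_nhds.add (tendsto_const_nhds.div hratio hs₀.ne')).sub
      (tendsto_id.const_mul α)
  have hnear := (hratio.eventually (lt_mem_nhds hs₀)).and <|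
    (hratio.eventually (gt_mem_nhds hs₁)).and (hbound.eventually
      (lt_mem_nhds (show -d < G + (L - G) / s₀ - α * xb by linarith)))
  have hlate := ((hlim w).eventually_const_lt hw).and ((hlim z).eventually_lt_const hG)
  filter_upwards [hlate.prod_mk hnear] with ⟨i, x⟩ ⟨⟨hLw, hGz⟩, hpos, hlt, hgt⟩
  have hxz : x - z ≠ 0 := fun h => by simp [h] at hpos
  have hline := (hconv i).add_div_le hpos hlt.le hGz.le (L := L)
    (by rw [div_mul_cancel₀ _ hxz]; exact hLw.le)
  rw [EReal.coe_sub_le_comm]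
  exact (EReal.coe_le_coe_iff.2 (by linarith)).trans hline

theorem eventually_conjE_le (hconv : ∀ i, Cvx (g i))
    (hlim : ∀ x, Tendsto (fun i => g i x) l (𝓝 (g0 x))) (hlsc : LowerSemicontinuous g0)
    (hdom : (edom g0).Nontrivial) {α c d : ℝ} (hα : ∀ᶠ β in 𝓝 α, conjE g0 β ≠ ⊤)
    (hc : conjE g0 α ≤ c) (hcd : c < d) : ∀ᶠ i in l, conjE (g i) α ≤ d := by
  obtain ⟨β₁, hβ₁, hβ₁α⟩ :=
    ((hα.filter_mono nhdsWithin_le_nhds).and (self_mem_nhdsWithin (s := Set.Iio α))).exists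
  obtain ⟨β₂, hβ₂, hαβ₂⟩ :=
    ((hα.filter_mono nhdsWithin_le_nhds).and (self_mem_nhdsWithin (s := Set.Ioi α))).exists
  obtain ⟨z, hz⟩ := hdom.nonempty
  obtain ⟨Y₁, hY₁⟩ := eventually_forall_le_sub_le hconv hlim hz hβ₁α hβ₁ d
  obtain ⟨Y₂, hY₂⟩ := eventually_forall_ge_sub_le hconv hlim hz hαβ₂ hβ₂ d
  have hK : ∀ᶠ i in l, ∀ x ∈ Set.Icc Y₁ Y₂, ((α * x : ℝ) : EReal) - g i x ≤ d := by
    refine (Eventually.curry (isCompact_Icc.mem_prod_nhdsSet_of_forall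
      (s := {p : ι × ℝ | ((α * p.2 : ℝ) : EReal) - g p.1 p.2 ≤ d}) fun xb _ => ?_)).mono
      fun i hi => hi.self_of_nhdsSet
    obtain ⟨z', hz', hne⟩ := hdom.exists_ne xb
    exact eventually_sub_le_nhds hconv hlim hlsc (coe_mul_sub_le_of_conjE_le hc) hcd hz' hne
  filter_upwards [hY₁, hY₂, hK] with i h₁ h₂ hK
  refine iSup_le fun x => ?_
  rcases le_or_gt x Y₁ with hx₁ | hx₁
  · exact h₁ x hx₁
  rcases le_or_gt Y₂ x with hx₂ | hx₂
  · exact h₂ x hx₂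
  exact hK x ⟨hx₁.le, hx₂.le⟩

end Convergence

theorem conj_tendsto_of_closed_general (g : ℕ → ℝ → EReal) (g0 : ℝ → EReal)
    (hlsc : LowerSemicontinuous g0)
    (hconvn : ∀ n, Cvx (g n))
    (hint : (interior (edom g0)).Nonempty)
    (hlim : ∀ x : ℝ, Tendsto (fun n => g n x) atTop (nhds (g0 x))) :
    ∀ α ∈ interior (edom (conjE g0)), Tendsto (fun n => conjE (g n) α) atTop (nhds (conjE g0 α)) := by
  intro α hα
  have hdom : (edom g0).Nontrivial := by
    obtain ⟨x, hx⟩ := hint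
    exact (infinite_of_mem_nhds x (isOpen_interior.mem_nhds hx)).nontrivial.mono interior_subset
  obtain ⟨c, hc⟩ : ∃ c : ℝ, conjE g0 α = c :=
    ⟨_, (EReal.coe_toReal (interior_subset hα) (conjE_ne_bot hdom.nonempty.some_mem α)).symm⟩
  rw [hc]
  refine tendsto_of_le_liminf_of_limsup_le (hc ▸ conjE_le_liminf hlim α) ?_
  refine EReal.le_of_forall_lt_iff_le.1 fun d hcd => limsup_le_of_le (by isBoundedDefault) ?_
  exact eventually_conjE_le hconvn hlim hlsc hdom (mem_interior_iff_mem_nhds.1 hα) hc.le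
    (EReal.coe_lt_coe_iff.1 hcd)

/-- Proposition 4.1: if `g_n, g` are closed (lower semicontinuous) proper convex
functions on `ℝ`, `Int(dom g) ≠ ∅`, and `g_n → g` pointwise on `ℝ`, then the
Legendre conjugates converge, `g_n* → g*`, pointwise on `Int(dom g*)`. -/
theorem conj_tendsto_of_closed (g : ℕ → ℝ → EReal) (g0 : ℝ → EReal)
    (hlscn : ∀ n, LowerSemicontinuous (g n)) (hlsc : LowerSemicontinuous g0)
    (hconvn : ∀ n, Cvx (g n)) (hconv : Cvx g0)
    (hpropern : ∀ n, (∀ x, ⊥ < g n x) ∧ ∃ x, g n x ≠ ⊤)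
    (hproper : (∀ x, ⊥ < g0 x) ∧ ∃ x, g0 x ≠ ⊤)
    (hint : (interior (edom g0)).Nonempty)
    (hlim : ∀ x : ℝ, Tendsto (fun n => g n x) atTop (nhds (g0 x))) :
    ∀ α ∈ interior (edom (conjE g0)), Tendsto (fun n => conjE (g n) α) atTop (nhds (conjE g0 α)) :=
  conj_tendsto_of_closed_general g g0 hlsc hconvn hint hlim
end

section
/- Suppose for each e in an index set I, the map φ_e : X → X satisfies ||φ_e'(y)| - |φ_e'(x)|| ≤ (L/‖(φ_e')^{-1}‖) ‖y-x‖^α for all x,y, where L ≥ 1, α > 0, and the contraction ratios satisfy |φ_e'| ≤ s < 1. Then for every finite word ω = ω₁⋯ω_n and all x, y: |log|φ_ω'(y)| - log|φ_ω'(x)|| ≤ (L/(1-s^α))·‖y-x‖^α, where φ_ω = φ_{ω₁} ∘ ⋯ ∘ φ_{ω_n}. -/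
/-- The composition `φ_ω = φ_{ω₁} ∘ ⋯ ∘ φ_{ω_n}` coded by a finite word `ω`. -/
def compW {E : Type*} {I : Type*} (φ : I → E → E) : List I → E → E
  | [], x => x
  | e :: ω, x => φ e (compW φ ω x)

/-- The derivative modulus `|φ_ω'(x)|` of the composition, via the chain rule:
`|φ_ω'(x)| = |φ_{ω₁}'(φ_{σω}(x))| ⋯`. Here `Dm e x` models `|φ_e'(x)|`. -/
def derW {E : Type*} {I : Type*} (φ : I → E → E) (Dm : I → E → ℝ) : List I → E → ℝ
  | [], _ => 1
  | e :: ω, x => Dm e (compW φ ω x) * derW φ Dm ω x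

/-
The chain rule makes `log |φ_ω'|` a sum over the letters of `ω`: the `k`-th term is
`log |φ_{ω_k}'|` evaluated at the images of `x` and `y` under the tail of `ω` of length
`n - k`, which are at distance at most `s^(n-k) ‖y - x‖`. Dividing the distortion condition
by `|φ_e'| ≥ ‖(φ_e')⁻¹‖⁻¹` makes each `log |φ_e'|` Hölder with constant `L`, so the `k`-th term
is at most `L (s^α)^(n-k) ‖y - x‖^α`, and the geometric series sums to `L / (1 - s^α)`.
-/

open Set

namespace Real

theorem abs_log_sub_log_le_mul {x y M : ℝ} (hx : 0 < x) (hy : 0 < y)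
    (hMx : x⁻¹ ≤ M) (hMy : y⁻¹ ≤ M) : |log y - log x| ≤ M * |y - x| := by
  wlog hxy : x ≤ y generalizing x y
  · rw [abs_sub_comm, abs_sub_comm y]
    exact this hy hx hMy hMx (le_of_not_ge hxy)
  rw [abs_of_nonneg (sub_nonneg.2 (log_le_log hx hxy)), abs_of_nonneg (sub_nonneg.2 hxy)]
  calc log y - log x = log (y / x) := (log_div hy.ne' hx.ne').symm
    _ ≤ y / x - 1 := log_le_sub_one_of_pos (div_pos hy hx)
    _ = x⁻¹ * (y - x) := by field_simp
    _ ≤ M * (y - x) := mul_le_mul_of_nonneg_right hMx (sub_nonneg.2 hxy)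

/-- When `z ↦ (f z)⁻¹` is unbounded on `X`, the junk value `sSup _ = 0` makes the hypothesis
force `f y = f x`. -/
theorem abs_log_sub_log_le_of_abs_sub_le_div_sSup {α : Type*} {X : Set α} {f : α → ℝ}
    {x y : α} {C : ℝ} (hf : ∀ z ∈ X, 0 < f z) (hx : x ∈ X) (hy : y ∈ X) (hC : 0 ≤ C)
    (h : |f y - f x| ≤ C / sSup ((fun z => (f z)⁻¹) '' X)) :
    |log (f y) - log (f x)| ≤ C := by
  set M := sSup ((fun z => (f z)⁻¹) '' X)
  by_cases hB : BddAbove ((fun z => (f z)⁻¹) '' X)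
  · have hMx : (f x)⁻¹ ≤ M := le_csSup hB ⟨x, hx, rfl⟩
    have hMpos : 0 < M := (inv_pos.2 (hf x hx)).trans_le hMx
    calc |log (f y) - log (f x)| ≤ M * |f y - f x| :=
          abs_log_sub_log_le_mul (hf x hx) (hf y hy) hMx (le_csSup hB ⟨y, hy, rfl⟩)
      _ ≤ M * (C / M) := mul_le_mul_of_nonneg_left h hMpos.le
      _ = C := by field_simp
  · rw [show M = 0 from sSup_of_not_bddAbove hB, div_zero, abs_nonpos_iff, sub_eq_zero] at h
    simpa [h] using hC

end Real

section Words

variable {E I : Type*} {φ : I → E → E} {X : Set E}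

theorem mapsTo_compW (hmaps : ∀ e, MapsTo (φ e) X X) (ω : List I) :
    MapsTo (compW φ ω) X X := by
  induction ω with
  | nil => exact mapsTo_id X
  | cons e ω ih => exact (hmaps e).comp ih

theorem derW_pos {Dm : I → E → ℝ} (hmaps : ∀ e, MapsTo (φ e) X X)
    (hpos : ∀ e, ∀ x ∈ X, 0 < Dm e x) (ω : List I) {x : E} (hx : x ∈ X) :
    0 < derW φ Dm ω x := by
  induction ω with
  | nil => exact one_pos
  | cons e ω ih => exact mul_pos (hpos e _ (mapsTo_compW hmaps ω hx)) ih

theorem log_derW_cons {Dm : I → E → ℝ} (hmaps : ∀ e, MapsTo (φ e) X X)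
    (hpos : ∀ e, ∀ x ∈ X, 0 < Dm e x) (e : I) (ω : List I) {x : E} (hx : x ∈ X) :
    Real.log (derW φ Dm (e :: ω) x) =
      Real.log (Dm e (compW φ ω x)) + Real.log (derW φ Dm ω x) :=
  Real.log_mul (hpos e _ (mapsTo_compW hmaps ω hx)).ne' (derW_pos hmaps hpos ω hx).ne'

theorem dist_compW_le [PseudoMetricSpace E] {s : ℝ} (hs : 0 ≤ s)
    (hmaps : ∀ e, MapsTo (φ e) X X)
    (hlip : ∀ e, ∀ x ∈ X, ∀ y ∈ X, dist (φ e x) (φ e y) ≤ s * dist x y)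
    (ω : List I) {x y : E} (hx : x ∈ X) (hy : y ∈ X) :
    dist (compW φ ω y) (compW φ ω x) ≤ s ^ ω.length * dist y x := by
  induction ω with
  | nil => simp [compW]
  | cons e ω ih =>
    calc dist (compW φ (e :: ω) y) (compW φ (e :: ω) x)
        ≤ s * dist (compW φ ω y) (compW φ ω x) :=
          hlip e _ (mapsTo_compW hmaps ω hy) _ (mapsTo_compW hmaps ω hx)
      _ ≤ s * (s ^ ω.length * dist y x) := mul_le_mul_of_nonneg_left ih hs
      _ = s ^ (e :: ω).length * dist y x := by rw [List.length_cons, pow_succ]; ring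

theorem dist_compW_rpow_le [PseudoMetricSpace E] {s a : ℝ} (hs : 0 ≤ s) (ha : 0 ≤ a)
    (hmaps : ∀ e, MapsTo (φ e) X X)
    (hlip : ∀ e, ∀ x ∈ X, ∀ y ∈ X, dist (φ e x) (φ e y) ≤ s * dist x y)
    (ω : List I) {x y : E} (hx : x ∈ X) (hy : y ∈ X) :
    dist (compW φ ω y) (compW φ ω x) ^ a ≤ (s ^ a) ^ ω.length * dist y x ^ a :=
  calc dist (compW φ ω y) (compW φ ω x) ^ a ≤ (s ^ ω.length * dist y x) ^ a :=
        Real.rpow_le_rpow dist_nonneg (dist_compW_le hs hmaps hlip ω hx hy) ha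
    _ = (s ^ a) ^ ω.length * dist y x ^ a := by
        rw [Real.mul_rpow (pow_nonneg hs _) dist_nonneg, ← Real.rpow_natCast,
          ← Real.rpow_natCast, ← Real.rpow_mul hs, ← Real.rpow_mul hs, mul_comm (ω.length : ℝ) a]

theorem abs_log_derW_sub_le_geom_sum [PseudoMetricSpace E] {Dm : I → E → ℝ} {s L a : ℝ}
    (hs : 0 ≤ s) (hL : 0 ≤ L) (ha : 0 ≤ a) (hmaps : ∀ e, MapsTo (φ e) X X)
    (hpos : ∀ e, ∀ x ∈ X, 0 < Dm e x)
    (hlip : ∀ e, ∀ x ∈ X, ∀ y ∈ X, dist (φ e x) (φ e y) ≤ s * dist x y)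
    (hlog : ∀ e, ∀ x ∈ X, ∀ y ∈ X,
      |Real.log (Dm e y) - Real.log (Dm e x)| ≤ L * dist y x ^ a)
    (ω : List I) {x y : E} (hx : x ∈ X) (hy : y ∈ X) :
    |Real.log (derW φ Dm ω y) - Real.log (derW φ Dm ω x)| ≤
      L * (∑ k ∈ Finset.range ω.length, (s ^ a) ^ k) * dist y x ^ a := by
  induction ω with
  | nil => simp [derW]
  | cons e ω ih =>
    have hhead : |Real.log (Dm e (compW φ ω y)) - Real.log (Dm e (compW φ ω x))| ≤
        L * ((s ^ a) ^ ω.length * dist y x ^ a) :=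
      (hlog e _ (mapsTo_compW hmaps ω hx) _ (mapsTo_compW hmaps ω hy)).trans
        (mul_le_mul_of_nonneg_left (dist_compW_rpow_le hs ha hmaps hlip ω hx hy) hL)
    rw [log_derW_cons hmaps hpos e ω hx, log_derW_cons hmaps hpos e ω hy,
      add_sub_add_comm, List.length_cons, Finset.sum_range_succ]
    calc _ ≤ _ := abs_add_le _ _
      _ ≤ _ := add_le_add hhead ih
      _ = _ := by ring

end Words

theorem log_der_holder_general {D : ℕ} (I : Type*)
    (X : Set (EuclideanSpace ℝ (Fin D)))
    (φ : I → EuclideanSpace ℝ (Fin D) → EuclideanSpace ℝ (Fin D))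
    (Dm : I → EuclideanSpace ℝ (Fin D) → ℝ)
    (s L a : ℝ) (hs0 : 0 < s) (hs1 : s < 1) (hL : 1 ≤ L) (ha : 0 < a)
    (hmaps : ∀ e, Set.MapsTo (φ e) X X)
    (hpos : ∀ e, ∀ x ∈ X, 0 < Dm e x)
    (hlip : ∀ e, ∀ x ∈ X, ∀ y ∈ X, dist (φ e x) (φ e y) ≤ s * dist x y)
    (hhold : ∀ e, ∀ x ∈ X, ∀ y ∈ X,
      |Dm e y - Dm e x| ≤ L / sSup ((fun z => (Dm e z)⁻¹) '' X) * dist y x ^ a) :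
    ∀ ω : List I, ∀ x ∈ X, ∀ y ∈ X,
      |Real.log (derW φ Dm ω y) - Real.log (derW φ Dm ω x)| ≤
        L / (1 - s ^ a) * dist y x ^ a := by
  intro ω x hx y hy
  have hL0 : 0 ≤ L := zero_le_one.trans hL
  have hlog : ∀ e, ∀ x ∈ X, ∀ y ∈ X,
      |Real.log (Dm e y) - Real.log (Dm e x)| ≤ L * dist y x ^ a := by
    intro e x hx y hy
    refine Real.abs_log_sub_log_le_of_abs_sub_le_div_sSup (hpos e) hx hy
      (mul_nonneg hL0 (Real.rpow_nonneg dist_nonneg a)) ?_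
    rw [mul_div_right_comm]
    exact hhold e x hx y hy
  have hgeom : ∑ k ∈ Finset.range ω.length, (s ^ a) ^ k ≤ 1 / (1 - s ^ a) := by
    have := geom_sum_Ico_le_of_lt_one (m := 0) (n := ω.length)
      (Real.rpow_nonneg hs0.le a) (Real.rpow_lt_one hs0.le hs1 ha)
    rwa [← Finset.range_eq_Ico, pow_zero] at this
  calc |Real.log (derW φ Dm ω y) - Real.log (derW φ Dm ω x)|
      ≤ L * (∑ k ∈ Finset.range ω.length, (s ^ a) ^ k) * dist y x ^ a :=
        abs_log_derW_sub_le_geom_sum hs0.le hL0 ha.le hmaps hpos hlip hlog ω hx hy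
    _ ≤ L * (1 / (1 - s ^ a)) * dist y x ^ a := by gcongr
    _ = L / (1 - s ^ a) * dist y x ^ a := by rw [mul_one_div]

/-- Lemma 2.3: if each contraction `φ_e` of a cIFS satisfies the distortion condition
`||φ_e'(y)| - |φ_e'(x)|| ≤ (L / ‖(φ_e')⁻¹‖_X) ‖y - x‖^α` with `0 < |φ_e'| ≤ s < 1`,
then for every finite word `ω` and all `x, y ∈ X`,
`|log|φ_ω'(y)| - log|φ_ω'(x)|| ≤ (L/(1 - s^α)) ‖y - x‖^α`. -/
theorem log_der_holder {D : ℕ} (I : Type*)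
    (X : Set (EuclideanSpace ℝ (Fin D))) (hXc : IsCompact X) (hXconn : IsConnected X)
    (φ : I → EuclideanSpace ℝ (Fin D) → EuclideanSpace ℝ (Fin D))
    (Dm : I → EuclideanSpace ℝ (Fin D) → ℝ)
    (s L a : ℝ) (hs0 : 0 < s) (hs1 : s < 1) (hL : 1 ≤ L) (ha : 0 < a)
    (hmaps : ∀ e, Set.MapsTo (φ e) X X)
    (hinj : ∀ e, Set.InjOn (φ e) X)
    (hpos : ∀ e, ∀ x ∈ X, 0 < Dm e x)
    (hcontr : ∀ e, ∀ x ∈ X, Dm e x ≤ s)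
    (hlip : ∀ e, ∀ x ∈ X, ∀ y ∈ X, dist (φ e x) (φ e y) ≤ s * dist x y)
    (hhold : ∀ e, ∀ x ∈ X, ∀ y ∈ X,
      |Dm e y - Dm e x| ≤ L / sSup ((fun z => (Dm e z)⁻¹) '' X) * dist y x ^ a) :
    ∀ ω : List I, ∀ x ∈ X, ∀ y ∈ X,
      |Real.log (derW φ Dm ω y) - Real.log (derW φ Dm ω x)| ≤
        L / (1 - s ^ a) * dist y x ^ a :=
  log_der_holder_general I X φ Dm s L a hs0 hs1 hL ha hmaps hpos hlip hhold
end

section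
/- For the constant continued fraction word n = (n,n,n,…) with n ≥ 2, the limit lim_{k→∞} (k·log n)/(log q_k(n)) exists and equals -log(n)/log(-n/2 + √(n²/4 + 1)), and this value is strictly less than 1. -/
/-!
The denominators `q k` and the scaled powers `C α ^ k` of `α = n/2 + √(n²/4 + 1)` satisfy the
same recurrence `w (k + 2) = n w (k + 1) + w k`, whose coefficients are nonnegative, so comparing
initial values gives `α ^ (k - 1) ≤ q k ≤ α ^ k`. Hence `log (q k) / k → log α`, and since
`-n/2 + √(n²/4 + 1) = α⁻¹` the limit is `log n / log α`, which is `< 1` because `n < α`.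
-/

open Filter Topology Real

theorem le_of_second_order_recurrence {a b : ℝ} (ha : 0 ≤ a) (hb : 0 ≤ b) {u v : ℕ → ℝ}
    (hu : ∀ k, u (k + 2) ≤ a * u (k + 1) + b * u k)
    (hv : ∀ k, a * v (k + 1) + b * v k ≤ v (k + 2))
    (h0 : u 0 ≤ v 0) (h1 : u 1 ≤ v 1) (k : ℕ) : u k ≤ v k := by
  suffices ∀ k, u k ≤ v k ∧ u (k + 1) ≤ v (k + 1) from (this k).1
  intro k
  induction k with
  | zero => exact ⟨h0, h1⟩
  | succ k ih =>
    refine ⟨ih.2, ?_⟩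
    calc u (k + 2) ≤ a * u (k + 1) + b * u k := hu k
      _ ≤ a * v (k + 1) + b * v k := by gcongr; exacts [ih.2, ih.1]
      _ ≤ v (k + 2) := hv k

theorem tendsto_add_mul_div_atTop (C L : ℝ) :
    Tendsto (fun k : ℕ => (C + k * L) / k) atTop (𝓝 L) := by
  have h := (tendsto_const_div_atTop_nhds_zero_nat C).add_const L
  rw [zero_add] at h
  refine h.congr' ?_
  filter_upwards [eventually_ne_atTop 0] with k hk
  rw [add_div, mul_div_cancel_left₀ _ (Nat.cast_ne_zero.mpr hk)]

theorem tendsto_log_div_of_mul_pow_le {u : ℕ → ℝ} {a c d : ℝ} (ha : 0 < a) (hc : 0 < c)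
    (hlo : ∀ k, c * a ^ k ≤ u k) (hhi : ∀ k, u k ≤ d * a ^ k) :
    Tendsto (fun k : ℕ => log (u k) / k) atTop (𝓝 (log a)) := by
  have hcd : c * a ^ 0 ≤ d * a ^ 0 := (hlo 0).trans (hhi 0)
  have hd : 0 < d := hc.trans_le (by simpa using hcd)
  have hlog_mul_pow {e : ℝ} (he : 0 < e) (k : ℕ) : log (e * a ^ k) = log e + k * log a := by
    rw [log_mul he.ne' (pow_pos ha k).ne', log_pow]
  refine tendsto_of_tendsto_of_tendsto_of_le_of_le (tendsto_add_mul_div_atTop (log c) _)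
    (tendsto_add_mul_div_atTop (log d) _) (fun k => ?_) (fun k => ?_)
  · refine div_le_div_of_nonneg_right ?_ k.cast_nonneg
    rw [← hlog_mul_pow hc]
    exact log_le_log (by positivity) (hlo k)
  · refine div_le_div_of_nonneg_right ?_ k.cast_nonneg
    rw [← hlog_mul_pow hd]
    exact log_le_log ((mul_pos hc (pow_pos ha k)).trans_le (hlo k)) (hhi k)

noncomputable def metallicMean (x : ℝ) : ℝ := x / 2 + √(x ^ 2 / 4 + 1)

theorem metallicMean_sq (x : ℝ) : metallicMean x ^ 2 = x * metallicMean x + 1 := by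
  have hs := sq_sqrt (by positivity : 0 ≤ x ^ 2 / 4 + 1)
  unfold metallicMean
  linear_combination hs

theorem lt_metallicMean {x : ℝ} (hx : 0 ≤ x) : x < metallicMean x := by
  have hs : x / 2 < √(x ^ 2 / 4 + 1) := (lt_sqrt (by positivity)).2 (by linarith)
  unfold metallicMean
  linarith

theorem neg_add_sqrt_eq_inv_metallicMean (x : ℝ) :
    -x / 2 + √(x ^ 2 / 4 + 1) = (metallicMean x)⁻¹ := by
  have hs := sq_sqrt (by positivity : 0 ≤ x ^ 2 / 4 + 1)
  refine eq_inv_of_mul_eq_one_left ?_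
  unfold metallicMean
  linear_combination hs

theorem mul_metallicMean_pow_add_two (x C : ℝ) (k : ℕ) :
    C * metallicMean x ^ (k + 2) =
      x * (C * metallicMean x ^ (k + 1)) + 1 * (C * metallicMean x ^ k) := by
  linear_combination C * metallicMean x ^ k * metallicMean_sq x

/-- For the constant continued fraction word `(n, n, n, …)` with `n ≥ 2`, where the
denominators satisfy `q₀ = 1`, `q₁ = n`, `q_{k+2} = n q_{k+1} + q_k`, the limit
`lim_k (k log n)/(log q_k)` exists and equals
`-log n / log (-n/2 + √(n²/4 + 1))`, and this value is strictly less than `1`. -/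
theorem gauss_constant_word_limit (n : ℕ) (hn : 2 ≤ n) (q : ℕ → ℕ)
    (h0 : q 0 = 1) (h1 : q 1 = n) (hrec : ∀ k, q (k + 2) = n * q (k + 1) + q k) :
    Tendsto (fun k : ℕ => ((k : ℝ) * Real.log n) / Real.log (q k)) atTop
      (nhds (-Real.log n / Real.log (-(n : ℝ) / 2 + Real.sqrt ((n : ℝ) ^ 2 / 4 + 1)))) ∧
    -Real.log n / Real.log (-(n : ℝ) / 2 + Real.sqrt ((n : ℝ) ^ 2 / 4 + 1)) < 1 := by
  set α := metallicMean n
  have hn1 : (1 : ℝ) ≤ n := by exact_mod_cast one_le_two.trans hn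
  have hnα : (n : ℝ) < α := lt_metallicMean n.cast_nonneg
  have hα : 0 < α := by linarith
  have hlogα : 0 < log α := log_pos (by linarith)
  have hq (k : ℕ) : (q (k + 2) : ℝ) = n * q (k + 1) + 1 * q k := by simp [hrec]
  have hlo : ∀ k, α⁻¹ * α ^ k ≤ q k :=
    le_of_second_order_recurrence n.cast_nonneg zero_le_one
      (fun k => (mul_metallicMean_pow_add_two _ _ k).le) (fun k => (hq k).ge)
      (by simpa [h0] using inv_le_one_of_one_le₀ (by linarith)) (by simpa [h1, hα.ne'] using hn1)
  have hhi : ∀ k, (q k : ℝ) ≤ 1 * α ^ k :=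
    le_of_second_order_recurrence n.cast_nonneg zero_le_one (fun k => (hq k).le)
      (fun k => (mul_metallicMean_pow_add_two _ _ k).ge) (by simp [h0])
      (by simpa [h1] using hnα.le)
  have hgrowth := tendsto_log_div_of_mul_pow_le hα (inv_pos.2 hα) hlo hhi
  rw [neg_add_sqrt_eq_inv_metallicMean, log_inv, div_neg, neg_div, neg_neg]
  refine ⟨?_, (div_lt_one hlogα).2 (log_lt_log (by positivity) hnα)⟩
  -- the rewriting below holds for every `k`, also `k = 0`, because `x / 0 = 0`
  refine (tendsto_const_nhds.div hgrowth hlogα.ne').congr fun k => ?_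
  rw [Pi.div_apply, div_div_eq_mul_div, mul_comm]
end

section
/- Let t_n, t be convex functions on ℝ with t_n → t pointwise, t finite at 0 with t(0) = d ≥ 0, and suppose sup dom(t) = +∞. Suppose there exist ε > 0 and infinitely many n such that t_n is differentiable on ℝ with inf{-t_n'(x) : x ∈ ℝ} < α₋ - ε, where α₋ := inf{-t⁻(x) : x ∈ Int(dom t)}. If moreover the Legendre-transform values -t_n*(-α) are nonnegative for all α in the range of -t_n', then a contradiction arises; equivalently: if t_n → t pointwise, sup dom(t) = +∞, t(0) < ∞, and -t_n*(-α) ≥ 0 whenever α ∈ (α₋ⁿ, α₊ⁿ), then liminf_n α₋ⁿ ≥ α₋. -/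
/-!
Suppose `α₋ⁿ < α` for infinitely many `n`. For such `n`, `t_n(β) + αβ ≥ min(0, t_n(0))` on
`[0, ∞)`: either `α < α₊ⁿ`, and this is `t_n*(-α) ≤ 0`, or `t_n' ≥ -α` everywhere and
`t_n + α·id` is monotone. In the limit `t(β) ≥ min(0, t(0)) - αβ` on `[0, ∞) ⊆ dom t`, so the
chord slopes `(t(x) - t(0))/x ≤ t⁻(x)` are at least `-α - O(1/x)`, and `α₋ ≤ α`.
-/

open Filter Topology

namespace Cvx

variable {t : ℝ → EReal}

theorem convex_edom (hconv : Cvx t) : Convex ℝ (edom t) := by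
  intro x hx y hy a b ha hb hab
  have hmul : ∀ {c : ℝ} {z : ℝ}, 0 ≤ c → t z ≠ ⊤ → (c : EReal) * t z ≠ ⊤ := fun hc hz => by
    simp [EReal.mul_ne_top, hc, hz]
  exact ne_top_of_le_ne_top (EReal.add_ne_top (hmul ha hx) (hmul hb hy))
    (hconv x y a b ha hb hab)

theorem Ici_subset_edom (hconv : Cvx t) {a : ℝ} (ha : t a ≠ ⊤)
    (hdom : ∀ M : ℝ, ∃ β > M, t β ≠ ⊤) : Set.Ici a ⊆ edom t := by
  intro β hβ
  obtain ⟨z, hβz, hz⟩ := hdom β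
  exact hconv.convex_edom.ordConnected.out ha hz ⟨hβ, hβz.le⟩

theorem convexOn_toReal (hconv : Cvx t) (hbot : ∀ x, ⊥ < t x) :
    ConvexOn ℝ (edom t) (fun x => (t x).toReal) := by
  refine ⟨hconv.convex_edom, fun x hx y hy a b ha hb hab => ?_⟩
  have hreal : ∀ {z}, z ∈ edom t → t z = ((t z).toReal : EReal) := fun hz =>
    (EReal.coe_toReal hz (hbot _).ne').symm
  have hmem : a * x + b * y ∈ edom t := hconv.convex_edom hx hy ha hb hab
  have h := hconv x y a b ha hb hab
  rw [hreal hmem, hreal hx, hreal hy] at h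
  exact_mod_cast h

/-- The point `z` bounds the slopes from the left, without which the `sSup` defining `leftD`
would be the junk value `0`. -/
theorem slope_le_leftD (hconv : Cvx t) (hbot : ∀ x, ⊥ < t x) {y x z : ℝ}
    (hyx : y < x) (hxz : x < z) (hy : t y ≠ ⊤) (hz : t z ≠ ⊤) :
    ((t x).toReal - (t y).toReal) / (x - y) ≤ leftD t x := by
  have hf := hconv.convexOn_toReal hbot
  have hx : x ∈ edom t := hf.1.ordConnected.out hy hz ⟨hyx.le, hxz.le⟩
  have hreal : ∀ {w}, w ∈ edom t → t w = ((t w).toReal : EReal) := fun hw =>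
    (EReal.coe_toReal hw (hbot _).ne').symm
  refine le_csSup ⟨((t z).toReal - (t x).toReal) / (z - x), ?_⟩ ⟨y, hyx, ?_⟩
  · rintro r ⟨w, hwx, hle⟩
    have hw : w ∈ edom t := fun hw => by
      rw [hw, EReal.sub_top] at hle
      exact EReal.coe_ne_bot _ (le_bot_iff.1 hle)
    rw [hreal hx, hreal hw, ← EReal.coe_sub, EReal.coe_le_coe_iff,
      ← le_div_iff₀ (sub_pos.2 hwx)] at hle
    exact hle.trans (hf.slope_mono_adjacent hw hz hwx hxz)
  · rw [div_mul_cancel₀ _ (sub_pos.2 hyx).ne', EReal.coe_sub, ← hreal hx, ← hreal hy]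

theorem iInf_neg_leftD_le (hconv : Cvx t) (hbot : ∀ x, ⊥ < t x)
    (hfin : Set.Ici 0 ⊆ edom t) {m α : ℝ} (hmin : ∀ β, 0 ≤ β → m - α * β ≤ (t β).toReal) :
    ⨅ x ∈ interior (edom t), ((-leftD t x : ℝ) : EReal) ≤ α := by
  set K := (t 0).toReal - m
  have hbound : ∀ x > 0,
      ⨅ x ∈ interior (edom t), ((-leftD t x : ℝ) : EReal) ≤ ((α + K / x : ℝ) : EReal) := by
    intro x hx
    have hint : x ∈ interior (edom t) := interior_mono hfin (by rwa [interior_Ici])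
    have hslope := hconv.slope_le_leftD hbot hx (lt_add_one x) (hfin Set.self_mem_Ici)
      (hfin (by linarith : (0 : ℝ) ≤ x + 1))
    have hchord : -α - K / x ≤ ((t x).toReal - (t 0).toReal) / (x - 0) := by
      rw [sub_zero, le_div_iff₀ hx, sub_mul, div_mul_cancel₀ _ hx.ne']
      linarith [hmin x hx.le]
    exact (iInf₂_le x hint).trans (EReal.coe_le_coe_iff.2 (by linarith))
  refine ge_of_tendsto (EReal.tendsto_coe.2 ?_) ((eventually_gt_atTop 0).mono hbound)
  simpa using (tendsto_const_nhds (x := α)).add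
    ((tendsto_const_nhds (x := K)).div_atTop tendsto_id)

end Cvx

theorem mul_le_of_conjE_nonpos {f : ℝ → ℝ} {a : ℝ}
    (h : conjE (fun x => (f x : EReal)) a ≤ 0) (β : ℝ) : a * β ≤ f β := by
  have hβ := (le_iSup (fun x => ((a * x : ℝ) : EReal) - (f x : EReal)) β).trans h
  rw [← EReal.coe_sub] at hβ
  linarith [show a * β - f β ≤ 0 by exact_mod_cast hβ]

theorem min_sub_mul_le_of_conjE_nonpos {f : ℝ → ℝ} (hf : Differentiable ℝ f) {α : ℝ}
    (hconj : (α : EReal) < ⨆ x, ((-deriv f x : ℝ) : EReal) →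
      conjE (fun x => (f x : EReal)) (-α) ≤ 0) {β : ℝ} (hβ : 0 ≤ β) :
    min 0 (f 0) - α * β ≤ f β := by
  by_cases hα : (α : EReal) < ⨆ x, ((-deriv f x : ℝ) : EReal)
  · linarith [mul_le_of_conjE_nonpos (hconj hα) β, min_le_left 0 (f 0)]
  · have hderiv : ∀ x, -α ≤ deriv f x := fun x => by
      have hx := (le_iSup (fun x => ((-deriv f x : ℝ) : EReal)) x).trans (not_lt.1 hα)
      linarith [show -deriv f x ≤ α by exact_mod_cast hx]
    linarith [mul_sub_le_image_sub_of_le_deriv hf hderiv hβ, min_le_right 0 (f 0)]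

theorem liminf_alpha_minus_ge_general (tn : ℕ → ℝ → ℝ) (t : ℝ → EReal)
    (hdiffn : ∀ n, Differentiable ℝ (tn n))
    (hconv : Cvx t) (hbot : ∀ x, ⊥ < t x)
    (hlim : ∀ β : ℝ, Tendsto (fun n => ((tn n β : ℝ) : EReal)) atTop (nhds (t β)))
    (hdom : ∀ M : ℝ, ∃ β > M, t β ≠ ⊤)
    (h0 : t 0 ≠ ⊤)
    (hpos : ∀ n : ℕ, ∀ α : ℝ,
      (⨅ x : ℝ, ((-(deriv (tn n) x) : ℝ) : EReal)) < (α : EReal) →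
      (α : EReal) < (⨆ x : ℝ, ((-(deriv (tn n) x) : ℝ) : EReal)) →
      conjE (fun x => ((tn n x : ℝ) : EReal)) (-α) ≤ 0) :
    (⨅ x ∈ interior (edom t), ((-leftD t x : ℝ) : EReal)) ≤
      Filter.atTop.liminf (fun n => ⨅ x : ℝ, ((-(deriv (tn n) x) : ℝ) : EReal)) := by
  have hfin : Set.Ici 0 ⊆ edom t := hconv.Ici_subset_edom h0 hdom
  have hlim_real : ∀ β, 0 ≤ β → Tendsto (fun n => tn n β) atTop (𝓝 (t β).toReal) :=
    fun β hβ => EReal.tendsto_coe.1 <| (EReal.coe_toReal (hfin hβ) (hbot β).ne') ▸ hlim β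
  rw [← EReal.le_of_forall_lt_iff_le]
  intro α hα
  have hfreq : ∃ᶠ n in atTop, (⨅ x : ℝ, ((-(deriv (tn n) x) : ℝ) : EReal)) < α :=
    frequently_lt_of_liminf_lt (by isBoundedDefault) hα
  refine hconv.iInf_neg_leftD_le hbot hfin (m := min 0 (t 0).toReal) fun β hβ => ?_
  refine le_of_tendsto_of_tendsto_of_frequently
    ((tendsto_const_nhds.min (hlim_real 0 le_rfl)).sub tendsto_const_nhds) (hlim_real β hβ) ?_
  exact hfreq.mono fun n hn => min_sub_mul_le_of_conjE_nonpos (hdiffn n) (hpos n α hn) hβ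

/-- Boundary estimate from the proof of Theorem 1.8: let `t_n : ℝ → ℝ` be finite
differentiable convex functions converging pointwise to the proper convex function
`t : ℝ → ℝ ∪ {∞}`, with `sup dom(t) = +∞` and `t(0) < ∞`. If moreover
`-t_n*(-α) ≥ 0` whenever `α ∈ (α₋ⁿ, α₊ⁿ)` (with `α₋ⁿ = inf {-t_n'(x)}`,
`α₊ⁿ = sup {-t_n'(x)}`), then `liminf_n α₋ⁿ ≥ α₋`, where
`α₋ = inf {-t⁻(x) : x ∈ Int(dom t)}`. -/
theorem liminf_alpha_minus_ge (tn : ℕ → ℝ → ℝ) (t : ℝ → EReal)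
    (hconvn : ∀ n, ConvexOn ℝ Set.univ (tn n)) (hdiffn : ∀ n, Differentiable ℝ (tn n))
    (hconv : Cvx t) (hbot : ∀ x, ⊥ < t x)
    (hlim : ∀ β : ℝ, Tendsto (fun n => ((tn n β : ℝ) : EReal)) atTop (nhds (t β)))
    (hdom : ∀ M : ℝ, ∃ β > M, t β ≠ ⊤)
    (h0 : t 0 ≠ ⊤)
    (hpos : ∀ n : ℕ, ∀ α : ℝ,
      (⨅ x : ℝ, ((-(deriv (tn n) x) : ℝ) : EReal)) < (α : EReal) →
      (α : EReal) < (⨆ x : ℝ, ((-(deriv (tn n) x) : ℝ) : EReal)) →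
      conjE (fun x => ((tn n x : ℝ) : EReal)) (-α) ≤ 0) :
    (⨅ x ∈ interior (edom t), ((-leftD t x : ℝ) : EReal)) ≤
      Filter.atTop.liminf (fun n => ⨅ x : ℝ, ((-(deriv (tn n) x) : ℝ) : EReal)) :=
  liminf_alpha_minus_ge_general tn t hdiffn hconv hbot hlim hdom h0 hpos
end

section
/- Let t : ℝ → ℝ ∪ {∞} be a proper convex function and α ∈ (α₋, α₊) where α₋ = inf{-t⁻(x) : x ∈ Int(dom t)} and α₊ = sup{-t⁺(x) : x ∈ Int(dom t)}. Then there exist x₁ > x₂ in Int(dom t) with -t⁻(x₁) < α < -t⁺(x₂); in particular -α belongs to the subdifferential ∂t(x) for some x ∈ Int(dom t), and hence -t*(-α) = t(x) + αx is finite. -/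
open Filter Topology

/-!
Put `φ u = t u + α u`. A slope of `t` from the left at `x₁` exceeding `-α` gives `y < x₁` with
`φ y < φ x₁`, and a slope from the right at `x₂` below `-α` gives `z > x₂` with `φ z < φ x₂`.
By convexity `φ` then increases strictly to the right of `x₁` and to the left of `x₂`; this forces
`x₂ < x₁` and makes a minimiser of the (continuous) `φ` on `[x₂, x₁]` a global one. A global
minimiser of `φ` is a point where `-α` is a subgradient of `t`, and there the supremum defining
`t*(-α)` is attained.
-/

/-- Off `edom g` the value is junk (`⊤.toReal = 0`); it is only compared on `edom g`. -/
noncomputable def tilt (g : ℝ → EReal) (c x : ℝ) : ℝ := (g x).toReal - c * x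

section ConvexReal

variable {S : Set ℝ} {φ : ℝ → ℝ}

theorem ConvexOn.lt_of_left_lt_of_lt (hφ : ConvexOn ℝ S φ) {y x w : ℝ} (hy : y ∈ S) (hw : w ∈ S)
    (hyx : y < x) (hxw : x < w) (h : φ y < φ x) : φ x < φ w :=
  hφ.lt_right_of_left_lt hy hw (by rw [openSegment_eq_Ioo (hyx.trans hxw)]; exact ⟨hyx, hxw⟩) h

theorem ConvexOn.lt_of_right_lt_of_lt (hφ : ConvexOn ℝ S φ) {z x w : ℝ} (hz : z ∈ S) (hw : w ∈ S)
    (hwx : w < x) (hxz : x < z) (h : φ z < φ x) : φ x < φ w :=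
  hφ.lt_left_of_right_lt hw hz (by rw [openSegment_eq_Ioo (hwx.trans hxz)]; exact ⟨hwx, hxz⟩) h

theorem ConvexOn.lt_of_right_lt_of_left_lt (hφ : ConvexOn ℝ S φ) {a b y z : ℝ} (ha : a ∈ S)
    (hy : y ∈ S) (hz : z ∈ S) (hyb : y < b) (hyφ : φ y < φ b) (haz : a < z) (hzφ : φ z < φ a) :
    a < b := by
  by_contra! hba
  have hya : φ y < φ a := by
    rcases hba.eq_or_lt with rfl | hlt
    · exact hyφ
    · exact hyφ.trans (hφ.lt_of_left_lt_of_lt hy ha hyb hlt hyφ)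
  exact (hφ.lt_of_left_lt_of_lt hy hz (hyb.trans_le hba) haz hya).not_gt hzφ

/-- A minimiser on `[a, b]` is global: by convexity `φ` increases to the right of `b` and to the
left of `a`. -/
theorem ConvexOn.exists_isMinOn_of_mem_Icc (hφ : ConvexOn ℝ S φ) {a b y z : ℝ} (hab : a ≤ b)
    (hsub : Set.Icc a b ⊆ interior S) (hy : y ∈ S) (hyb : y < b) (hyφ : φ y < φ b)
    (hz : z ∈ S) (haz : a < z) (hzφ : φ z < φ a) :
    ∃ x ∈ Set.Icc a b, IsMinOn φ S x := by
  obtain ⟨x, hx, hmin⟩ := isCompact_Icc.exists_isMinOn (Set.nonempty_Icc.2 hab)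
    (hφ.continuousOn_interior.mono hsub)
  refine ⟨x, hx, fun w hw => ?_⟩
  rcases lt_or_ge w a with hwa | haw
  · exact (hmin (Set.left_mem_Icc.2 hab)).trans (hφ.lt_of_right_lt_of_lt hz hw hwa haz hzφ).le
  rcases le_or_gt w b with hwb | hbw
  · exact hmin ⟨haw, hwb⟩
  · exact (hmin (Set.right_mem_Icc.2 hab)).trans (hφ.lt_of_left_lt_of_lt hy hw hyb hbw hyφ).le

end ConvexReal

section EReal

variable {g : ℝ → EReal}

theorem coe_toReal_of_mem_edom (hbot : ∀ x, ⊥ < g x) {x : ℝ} (hx : x ∈ edom g) :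
    ((g x).toReal : EReal) = g x :=
  EReal.coe_toReal hx (hbot x).ne'

theorem Cvx.apply_le_coe (hconv : Cvx g) (hbot : ∀ x, ⊥ < g x) {u v a b : ℝ}
    (hu : u ∈ edom g) (hv : v ∈ edom g) (ha : 0 ≤ a) (hb : 0 ≤ b) (hab : a + b = 1) :
    g (a * u + b * v) ≤ ((a * (g u).toReal + b * (g v).toReal : ℝ) : EReal) := by
  have h := hconv u v a b ha hb hab
  rwa [← coe_toReal_of_mem_edom hbot hu, ← coe_toReal_of_mem_edom hbot hv, ← EReal.coe_mul,
    ← EReal.coe_mul, ← EReal.coe_add] at h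

theorem Cvx.convex_edom_s19 (hconv : Cvx g) (hbot : ∀ x, ⊥ < g x) : Convex ℝ (edom g) :=
  fun _ hu _ hv _ _ ha hb hab =>
    ne_top_of_le_ne_top (EReal.coe_ne_top _) (hconv.apply_le_coe hbot hu hv ha hb hab)

theorem Cvx.convexOn_tilt (hconv : Cvx g) (hbot : ∀ x, ⊥ < g x) (c : ℝ) :
    ConvexOn ℝ (edom g) (tilt g c) := by
  have hdom := hconv.convex_edom_s19 hbot
  have hreal : ConvexOn ℝ (edom g) fun x => (g x).toReal := by
    refine ⟨hdom, fun u hu v hv a b ha hb hab => ?_⟩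
    have hw : a * u + b * v ∈ edom g := hdom hu hv ha hb hab
    have h := hconv.apply_le_coe hbot hu hv ha hb hab
    rw [← coe_toReal_of_mem_edom hbot hw, EReal.coe_le_coe_iff] at h
    simpa only [smul_eq_mul] using h
  exact hreal.sub ((LinearMap.mul ℝ ℝ c).concaveOn hdom)

theorem exists_tilt_lt_of_lt_leftD (hbot : ∀ x, ⊥ < g x) {x c : ℝ} (hx : x ∈ interior (edom g))
    (hc : c < leftD g x) : ∃ y ∈ edom g, y < x ∧ tilt g c y < tilt g c x := by
  have hxdom : x ∈ edom g := interior_subset hx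
  obtain ⟨y₀, hy₀, hy₀x⟩ :=
    Filter.nonempty_of_mem <| Filter.inter_mem
      (nhdsWithin_le_nhds (mem_interior_iff_mem_nhds.1 hx)) (self_mem_nhdsWithin (s := Set.Iio x))
  have hne : {r : ℝ | ∃ y < x, ((r * (x - y) : ℝ) : EReal) ≤ g x - g y}.Nonempty := by
    refine ⟨((g x).toReal - (g y₀).toReal) / (x - y₀), y₀, hy₀x, le_of_eq ?_⟩
    rw [div_mul_cancel₀ _ (sub_ne_zero.2 hy₀x.ne'), EReal.coe_sub,
      coe_toReal_of_mem_edom hbot hxdom, coe_toReal_of_mem_edom hbot hy₀]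
  obtain ⟨r, ⟨y, hyx, hyr⟩, hcr⟩ := exists_lt_of_lt_csSup hne hc
  have hy : y ∈ edom g := fun htop => by
    rw [htop, EReal.sub_top, le_bot_iff] at hyr
    exact EReal.coe_ne_bot _ hyr
  rw [← coe_toReal_of_mem_edom hbot hxdom, ← coe_toReal_of_mem_edom hbot hy, ← EReal.coe_sub,
    EReal.coe_le_coe_iff] at hyr
  refine ⟨y, hy, hyx, ?_⟩
  unfold tilt
  nlinarith [mul_lt_mul_of_pos_right hcr (sub_pos.2 hyx)]

theorem exists_tilt_lt_of_rightD_lt (hbot : ∀ x, ⊥ < g x) {x c : ℝ} (hx : x ∈ interior (edom g))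
    (hc : rightD g x < c) : ∃ z ∈ edom g, x < z ∧ tilt g c z < tilt g c x := by
  have hxdom : x ∈ edom g := interior_subset hx
  obtain ⟨z₀, hz₀, hxz₀⟩ :=
    Filter.nonempty_of_mem <| Filter.inter_mem
      (nhdsWithin_le_nhds (mem_interior_iff_mem_nhds.1 hx)) (self_mem_nhdsWithin (s := Set.Ioi x))
  have hne : {r : ℝ | ∃ z > x, g z - g x ≤ ((r * (z - x) : ℝ) : EReal)}.Nonempty := by
    refine ⟨((g z₀).toReal - (g x).toReal) / (z₀ - x), z₀, hxz₀, le_of_eq ?_⟩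
    rw [div_mul_cancel₀ _ (sub_ne_zero.2 hxz₀.ne'), EReal.coe_sub,
      coe_toReal_of_mem_edom hbot hxdom, coe_toReal_of_mem_edom hbot hz₀]
  obtain ⟨r, ⟨z, hxz, hzr⟩, hrc⟩ := exists_lt_of_csInf_lt hne hc
  have hz : z ∈ edom g := fun htop => by
    rw [htop, ← coe_toReal_of_mem_edom hbot hxdom, EReal.top_sub_coe, top_le_iff] at hzr
    exact EReal.coe_ne_top _ hzr
  rw [← coe_toReal_of_mem_edom hbot hxdom, ← coe_toReal_of_mem_edom hbot hz, ← EReal.coe_sub,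
    EReal.coe_le_coe_iff] at hzr
  refine ⟨z, hz, hxz, ?_⟩
  unfold tilt
  nlinarith [mul_lt_mul_of_pos_right hrc (sub_pos.2 hxz)]

variable {c x : ℝ}

theorem coe_mul_sub_le_of_isMinOn_tilt (hbot : ∀ x, ⊥ < g x) (hx : x ∈ edom g)
    (hmin : IsMinOn (tilt g c) (edom g) x) (x' : ℝ) :
    ((c * (x' - x) : ℝ) : EReal) ≤ g x' - g x := by
  by_cases htop : g x' = ⊤
  · rw [htop, ← coe_toReal_of_mem_edom hbot hx, EReal.top_sub_coe]
    exact le_top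
  · have h : tilt g c x ≤ tilt g c x' := hmin htop
    rw [← coe_toReal_of_mem_edom hbot hx, ← coe_toReal_of_mem_edom hbot htop, ← EReal.coe_sub,
      EReal.coe_le_coe_iff]
    unfold tilt at h
    linarith

theorem conjE_eq_of_isMinOn_tilt (hbot : ∀ x, ⊥ < g x) (hx : x ∈ edom g)
    (hmin : IsMinOn (tilt g c) (edom g) x) :
    conjE g c = ((c * x - (g x).toReal : ℝ) : EReal) := by
  refine le_antisymm (iSup_le fun x' => ?_) ?_
  · by_cases htop : g x' = ⊤
    · rw [htop, EReal.sub_top]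
      exact bot_le
    · have h : tilt g c x ≤ tilt g c x' := hmin htop
      rw [← coe_toReal_of_mem_edom hbot htop, ← EReal.coe_sub, EReal.coe_le_coe_iff]
      unfold tilt at h
      linarith
  · refine le_of_eq_of_le ?_ (le_iSup _ x)
    rw [EReal.coe_sub, coe_toReal_of_mem_edom hbot hx]

end EReal

theorem subgradient_attained_of_mem_Ioo_general (t : ℝ → EReal) (hconv : Cvx t)
    (hbot : ∀ x, ⊥ < t x) (α : ℝ)
    (hlow : (⨅ x ∈ interior (edom t), ((-leftD t x : ℝ) : EReal)) < (α : EReal))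
    (hup : (α : EReal) < ⨆ x ∈ interior (edom t), ((-rightD t x : ℝ) : EReal)) :
    (∃ x₁ ∈ interior (edom t), ∃ x₂ ∈ interior (edom t),
        x₂ < x₁ ∧ -leftD t x₁ < α ∧ α < -rightD t x₂) ∧
    ∃ x ∈ interior (edom t),
      (∀ x' : ℝ, (((-α) * (x' - x) : ℝ) : EReal) ≤ t x' - t x) ∧
      -conjE t (-α) = t x + ((α * x : ℝ) : EReal) ∧
      ∃ r : ℝ, conjE t (-α) = (r : EReal) := by
  obtain ⟨x₁, hx₁, hlt₁⟩ := by simpa only [iInf_lt_iff, exists_prop] using hlow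
  obtain ⟨x₂, hx₂, hlt₂⟩ := by simpa only [lt_iSup_iff, exists_prop] using hup
  rw [EReal.coe_lt_coe_iff] at hlt₁ hlt₂
  obtain ⟨y, hy, hyx₁, hyφ⟩ := exists_tilt_lt_of_lt_leftD hbot hx₁ (c := -α) (by linarith)
  obtain ⟨z, hz, hx₂z, hzφ⟩ := exists_tilt_lt_of_rightD_lt hbot hx₂ (c := -α) (by linarith)
  have hφ := hconv.convexOn_tilt hbot (-α)
  have hx₂₁ : x₂ < x₁ := hφ.lt_of_right_lt_of_left_lt (interior_subset hx₂) hy hz hyx₁ hyφ hx₂z hzφ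
  have hIcc : Set.Icc x₂ x₁ ⊆ interior (edom t) :=
    (hconv.convex_edom_s19 hbot).interior.ordConnected.out hx₂ hx₁
  obtain ⟨x, hxIcc, hmin⟩ :=
    hφ.exists_isMinOn_of_mem_Icc hx₂₁.le hIcc hy hyx₁ hyφ hz hx₂z hzφ
  have hx : x ∈ edom t := interior_subset (hIcc hxIcc)
  have hconj := conjE_eq_of_isMinOn_tilt hbot hx hmin
  refine ⟨⟨x₁, hx₁, x₂, hx₂, hx₂₁, hlt₁, hlt₂⟩, x, hIcc hxIcc,
    coe_mul_sub_le_of_isMinOn_tilt hbot hx hmin, ?_, _, hconj⟩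
  rw [hconj, ← EReal.coe_neg, show -(-α * x - (t x).toReal) = (t x).toReal + α * x by ring,
    EReal.coe_add, coe_toReal_of_mem_edom hbot hx]

/-- For a proper convex function `t : ℝ → ℝ ∪ {∞}` and
`α ∈ (α₋, α₊)`, where `α₋ = inf {-t⁻(x) : x ∈ Int(dom t)}` and
`α₊ = sup {-t⁺(x) : x ∈ Int(dom t)}`, there exist `x₁ > x₂` in `Int(dom t)` with
`-t⁻(x₁) < α < -t⁺(x₂)`; in particular `-α ∈ ∂t(x)` for some `x ∈ Int(dom t)`,
and hence `-t*(-α) = t(x) + α x` is finite. -/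
theorem subgradient_attained_of_mem_Ioo (t : ℝ → EReal) (hconv : Cvx t)
    (hbot : ∀ x, ⊥ < t x) (hfin : ∃ x, t x ≠ ⊤) (α : ℝ)
    (hlow : (⨅ x ∈ interior (edom t), ((-leftD t x : ℝ) : EReal)) < (α : EReal))
    (hup : (α : EReal) < ⨆ x ∈ interior (edom t), ((-rightD t x : ℝ) : EReal)) :
    (∃ x₁ ∈ interior (edom t), ∃ x₂ ∈ interior (edom t),
        x₂ < x₁ ∧ -leftD t x₁ < α ∧ α < -rightD t x₂) ∧
    ∃ x ∈ interior (edom t),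
      (∀ x' : ℝ, (((-α) * (x' - x) : ℝ) : EReal) ≤ t x' - t x) ∧
      -conjE t (-α) = t x + ((α * x : ℝ) : EReal) ∧
      ∃ r : ℝ, conjE t (-α) = (r : EReal) :=
  subgradient_attained_of_mem_Ioo_general t hconv hbot α hlow hup
end
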